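/- (Global convergence of the PMM, items (a)-(b).) There exist z* ∈ ℝ^n solving the dual problem and w* ∈ ℝ^n with −w* ∈ ∂h1(z*) and w* ∈ ∂h2(z*), such that the PMM sequences satisfy (x_k, b_k) → (z*, w*), (y_k, −a_k) → (z*, w*) and (z_k, w_k) → (z*, w*) as k → ∞; in particular Mu_k+Cv_k−d → 0 and x_k−y_k → 0. -/

import Mathlib

open scoped RealInnerProductSpace

noncomputable section

/-- `w` is a subgradient of the extended-real-valued function `φ` at `x`. -/
def HasSubgrad {E : Type*} [NormedAddCommGroup E] [InnerProductSpace ℝ E]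
    (φ : E → EReal) (w x : E) : Prop :=
  ∀ x' : E, φ x + ((⟪w, x' - x⟫ : ℝ) : EReal) ≤ φ x'

/-- `w` is an `ε`-subgradient of `φ` at `x`. -/
def HasESubgrad {E : Type*} [NormedAddCommGroup E] [InnerProductSpace ℝ E]
    (φ : E → EReal) (ε : ℝ) (w x : E) : Prop :=
  ∀ x' : E, φ x + ((⟪w, x' - x⟫ : ℝ) : EReal) - (ε : EReal) ≤ φ x'

/-- Convexity for an extended-real-valued function. -/
def ConvexE {E : Type*} [NormedAddCommGroup E] [InnerProductSpace ℝ E]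
    (φ : E → EReal) : Prop :=
  ∀ x y : E, ∀ a b : ℝ, 0 ≤ a → 0 ≤ b → a + b = 1 →
    φ (a • x + b • y) ≤ (a : EReal) * φ x + (b : EReal) * φ y

/-- Proper closed convex function with values in `(-∞, ∞]`. -/
def IsPCC {E : Type*} [NormedAddCommGroup E] [InnerProductSpace ℝ E]
    (φ : E → EReal) : Prop :=
  (∀ x, φ x ≠ ⊥) ∧ (∃ x, φ x ≠ ⊤) ∧ LowerSemicontinuous φ ∧ ConvexE φ

/-- Fenchel conjugate. -/
def fconj {E : Type*} [NormedAddCommGroup E] [InnerProductSpace ℝ E]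
    (φ : E → EReal) (w : E) : EReal :=
  ⨆ x : E, ((⟪w, x⟫ : ℝ) : EReal) - φ x

/-- Lagrangian of `min { f u + g v : M u + C v = d }`. -/
def Lag {E₁ E₂ F : Type*} [NormedAddCommGroup E₁] [InnerProductSpace ℝ E₁]
    [NormedAddCommGroup E₂] [InnerProductSpace ℝ E₂]
    [NormedAddCommGroup F] [InnerProductSpace ℝ F]
    (f : E₁ → EReal) (g : E₂ → EReal) (M : E₁ →ₗ[ℝ] F) (C : E₂ →ₗ[ℝ] F) (d : F)
    (u : E₁) (v : E₂) (z : F) : EReal :=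
  f u + g v + ((⟪M u + C v - d, z⟫ : ℝ) : EReal)

/-- Saddle point of the Lagrangian. -/
def IsSaddle {E₁ E₂ F : Type*} [NormedAddCommGroup E₁] [InnerProductSpace ℝ E₁]
    [NormedAddCommGroup E₂] [InnerProductSpace ℝ E₂]
    [NormedAddCommGroup F] [InnerProductSpace ℝ F]
    (f : E₁ → EReal) (g : E₂ → EReal) (M : E₁ →ₗ[ℝ] F) (C : E₂ →ₗ[ℝ] F) (d : F)
    (us : E₁) (vs : E₂) (zs : F) : Prop :=
  Lag f g M C d us vs zs ≠ ⊤ ∧ Lag f g M C d us vs zs ≠ ⊥ ∧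
  (∀ u v, Lag f g M C d us vs zs ≤ Lag f g M C d u v zs) ∧
  (∀ ζ, Lag f g M C d us vs ζ ≤ Lag f g M C d us vs zs)

/-- `h₁(z) = f*(-M* z)`. -/
def hOne {E₁ F : Type*} [NormedAddCommGroup E₁] [InnerProductSpace ℝ E₁]
    [FiniteDimensional ℝ E₁] [NormedAddCommGroup F] [InnerProductSpace ℝ F]
    [FiniteDimensional ℝ F] (f : E₁ → EReal) (M : E₁ →ₗ[ℝ] F) (z : F) : EReal :=
  fconj f (-(LinearMap.adjoint M z))

/-- `h₂(z) = g*(-C* z) + ⟪d, z⟫`. -/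
def hTwo {E₂ F : Type*} [NormedAddCommGroup E₂] [InnerProductSpace ℝ E₂]
    [FiniteDimensional ℝ E₂] [NormedAddCommGroup F] [InnerProductSpace ℝ F]
    [FiniteDimensional ℝ F] (g : E₂ → EReal) (C : E₂ →ₗ[ℝ] F) (d : F) (z : F) : EReal :=
  fconj g (-(LinearMap.adjoint C z)) + ((⟪d, z⟫ : ℝ) : EReal)

/-- The extended solution set `S_e(∂h₁, ∂h₂)`. -/
def extSolSet {E₁ E₂ F : Type*} [NormedAddCommGroup E₁] [InnerProductSpace ℝ E₁]
    [FiniteDimensional ℝ E₁] [NormedAddCommGroup E₂] [InnerProductSpace ℝ E₂]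
    [FiniteDimensional ℝ E₂] [NormedAddCommGroup F] [InnerProductSpace ℝ F]
    [FiniteDimensional ℝ F]
    (f : E₁ → EReal) (g : E₂ → EReal) (M : E₁ →ₗ[ℝ] F) (C : E₂ →ₗ[ℝ] F) (d : F) :
    Set (F × F) :=
  {p | HasSubgrad (hOne f M) (-p.2) p.1 ∧ HasSubgrad (hTwo g C d) p.2 p.1}


/-!
Optimality of the two proximal steps gives `d - C v_k ∈ ∂h₂(x_k)` and `-M u_k ∈ ∂h₁(y_k)`.
Testing these against any `(z̄, w̄)` of the extended solution set with the monotonicity of `∂h₁`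
and `∂h₂`, the choice of `γ_k` makes `(z_k, w_k)` Fejér monotone, with a decrease of at least a
multiple of `‖M u_k + C v_k - d‖² + λ² ‖w_{k-1} - M u_k‖²` because `γ_k ≥ λ / (2 (1 + λ²))`; so
these residuals vanish. The graphs of `∂h₁` and `∂h₂` are closed (`h₁`, `h₂` are lower
semicontinuous as conjugates), hence every cluster point of `(z_k, w_k)` is in the extended
solution set, which the saddle point makes nonempty, and Fejér monotonicity turns one convergent
subsequence into convergence of the whole sequence.
-/

open Filter Topology

section ConvexAnalysis

variable {E F : Type*} [NormedAddCommGroup E] [InnerProductSpace ℝ E]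
  [NormedAddCommGroup F] [InnerProductSpace ℝ F]

theorem HasSubgrad.inner_sub_nonneg {φ : E → EReal} {x₁ x₂ w₁ w₂ : E} {c : ℝ}
    (h₁ : HasSubgrad φ w₁ x₁) (h₂ : HasSubgrad φ w₂ x₂) (hx₁ : φ x₁ = c) :
    0 ≤ ⟪x₁ - x₂, w₁ - w₂⟫ := by
  have h₁₂ := h₁ x₂
  have h₂₁ := h₂ x₁
  rw [hx₁] at h₁₂ h₂₁
  generalize φ x₂ = a at h₁₂ h₂₁
  induction a using EReal.rec with
  | bot => simp at h₁₂
  | top => simp at h₂₁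
  | coe a =>
    norm_cast at h₁₂ h₂₁
    have : ⟪x₁ - x₂, w₁ - w₂⟫ = -(⟪w₁, x₂ - x₁⟫ + ⟪w₂, x₁ - x₂⟫) := by
      simp only [inner_sub_left, inner_sub_right, real_inner_comm]; ring
    linarith

theorem le_fconj (φ : E → EReal) (ξ x : E) : ((⟪ξ, x⟫ : ℝ) : EReal) - φ x ≤ fconj φ ξ :=
  le_iSup (fun x => ((⟪ξ, x⟫ : ℝ) : EReal) - φ x) x

theorem HasSubgrad.fconj_eq {φ : E → EReal} {ξ x : E} {c : ℝ} (h : HasSubgrad φ ξ x)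
    (hx : φ x = c) : fconj φ ξ = ((⟪ξ, x⟫ - c : ℝ) : EReal) := by
  refine le_antisymm (iSup_le fun x' => ?_) (by simpa [hx] using le_fconj φ ξ x)
  have hx' := h x'
  rw [hx] at hx'
  generalize φ x' = a at hx' ⊢
  induction a using EReal.rec with
  | bot => simp at hx'
  | top => simp
  | coe a =>
    norm_cast at hx' ⊢
    rw [inner_sub_right] at hx'
    linarith

theorem HasSubgrad.hasSubgrad_fconj {φ : E → EReal} {ξ x : E} {c : ℝ} (h : HasSubgrad φ ξ x)
    (hx : φ x = c) : HasSubgrad (fconj φ) x ξ := fun ξ' => by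
  calc fconj φ ξ + ((⟪x, ξ' - ξ⟫ : ℝ) : EReal) = ((⟪ξ', x⟫ : ℝ) : EReal) - φ x := by
        rw [h.fconj_eq hx, hx, inner_sub_right, real_inner_comm x, real_inner_comm x]
        norm_cast
        ring
    _ ≤ fconj φ ξ' := le_fconj φ ξ' x

theorem HasSubgrad.add_inner {ψ : F → EReal} {a y : F} (h : HasSubgrad ψ a y) (d : F) :
    HasSubgrad (fun z => ψ z + ((⟪d, z⟫ : ℝ) : EReal)) (a + d) y := fun ζ => by
  calc ψ y + ((⟪d, y⟫ : ℝ) : EReal) + ((⟪a + d, ζ - y⟫ : ℝ) : EReal)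
        = ψ y + ((⟪a, ζ - y⟫ : ℝ) : EReal) + ((⟪d, ζ⟫ : ℝ) : EReal) := by
        rw [add_assoc, add_assoc, ← EReal.coe_add, ← EReal.coe_add, inner_add_left,
          inner_sub_right d]
        ring_nf
    _ ≤ ψ ζ + ((⟪d, ζ⟫ : ℝ) : EReal) := add_le_add (h ζ) le_rfl

theorem nonneg_of_forall_nonneg_add_mul {a b : ℝ} (h : ∀ t, 0 < t → t ≤ 1 → 0 ≤ a + t * b) :
    0 ≤ a := by
  have hlim : Tendsto (fun t => a + t * b) (𝓝[>] 0) (𝓝 a) := by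
    have : Continuous fun t : ℝ => a + t * b := by fun_prop
    simpa using (this.tendsto 0).mono_left nhdsWithin_le_nhds
  exact ge_of_tendsto hlim (eventually_of_mem (Ioc_mem_nhdsGT one_pos) fun t ht => h t ht.1 ht.2)

theorem ne_top_of_forall_le_add_coe {α : Type*} {φ : α → EReal} {a : ℝ} {q : α → ℝ} {x₀ x : α}
    (hmin : ∀ x', φ x₀ + (a : EReal) ≤ φ x' + (q x' : EReal)) (hx : φ x ≠ ⊤) : φ x₀ ≠ ⊤ := by
  intro h
  have := hmin x
  rw [h, EReal.top_add_coe, top_le_iff] at this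
  exact EReal.add_ne_top hx (EReal.coe_ne_top _) this

end ConvexAnalysis

section FiniteDimensional

variable {E F : Type*} [NormedAddCommGroup E] [InnerProductSpace ℝ E] [FiniteDimensional ℝ E]
  [NormedAddCommGroup F] [InnerProductSpace ℝ F] [FiniteDimensional ℝ F]

theorem HasSubgrad.comp_neg_adjoint {ψ : E → EReal} {a : E} {L : E →ₗ[ℝ] F} {y : F}
    (h : HasSubgrad ψ a (-(LinearMap.adjoint L y))) :
    HasSubgrad (fun z => ψ (-(LinearMap.adjoint L z))) (-(L a)) y := fun ζ => by
  have key : ⟪a, -(LinearMap.adjoint L ζ) - -(LinearMap.adjoint L y)⟫ = ⟪-(L a), ζ - y⟫ := by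
    rw [neg_sub_neg, ← map_sub, LinearMap.adjoint_inner_right, inner_neg_left, ← inner_neg_right,
      neg_sub]
  simpa only [key] using h (-(LinearMap.adjoint L ζ))

theorem hasSubgrad_hOne_of_hasSubgrad {f : E → EReal} {M : E →ₗ[ℝ] F} {u : E} {z : F} {c : ℝ}
    (h : HasSubgrad f (-(LinearMap.adjoint M z)) u) (hu : f u = c) :
    (∃ c' : ℝ, hOne f M z = c') ∧ HasSubgrad (hOne f M) (-(M u)) z :=
  ⟨⟨_, h.fconj_eq hu⟩, (h.hasSubgrad_fconj hu).comp_neg_adjoint⟩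

theorem hasSubgrad_hTwo_of_hasSubgrad {g : E → EReal} {C : E →ₗ[ℝ] F} {d : F} {v : E} {z : F}
    {c : ℝ} (h : HasSubgrad g (-(LinearMap.adjoint C z)) v) (hv : g v = c) :
    (∃ c' : ℝ, hTwo g C d z = c') ∧ HasSubgrad (hTwo g C d) (d - C v) z := by
  obtain ⟨⟨c', hc'⟩, hsub⟩ := hasSubgrad_hOne_of_hasSubgrad h hv
  refine ⟨⟨c' + ⟪d, z⟫, ?_⟩, ?_⟩
  · rw [EReal.coe_add, ← hc']
    rfl
  · have := hsub.add_inner d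
    rwa [neg_add_eq_sub] at this

theorem hasSubgrad_of_forall_le_add_augmented {φ : E → EReal} (hbot : ∀ x, φ x ≠ ⊥)
    (hconv : ConvexE φ) {L : E →ₗ[ℝ] F} {a p : F} {lam : ℝ} {v₀ : E} {c : ℝ} (hv₀ : φ v₀ = c)
    (hmin : ∀ v, φ v₀ + ((⟪p, L v₀ - a⟫ + lam / 2 * ‖L v₀ - a‖ ^ 2 : ℝ) : EReal) ≤
      φ v + ((⟪p, L v - a⟫ + lam / 2 * ‖L v - a‖ ^ 2 : ℝ) : EReal)) :
    HasSubgrad φ (-(LinearMap.adjoint L (p + lam • (L v₀ - a)))) v₀ := fun v => by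
  set e := L v₀ - a
  set δ := L v - L v₀
  have hinner : ⟪-(LinearMap.adjoint L (p + lam • e)), v - v₀⟫ = -⟪p + lam • e, δ⟫ := by
    rw [inner_neg_left, LinearMap.adjoint_inner_left, map_sub]
  rw [hv₀, hinner]
  generalize hcv : φ v = cv
  induction cv using EReal.rec with
  | bot => exact absurd hcv (hbot v)
  | top => exact le_top
  | coe cv =>
    norm_cast
    suffices 0 ≤ cv - c + ⟪p + lam • e, δ⟫ by linarith
    refine nonneg_of_forall_nonneg_add_mul (b := lam / 2 * ‖δ‖ ^ 2) fun t ht ht₁ => ?_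
    have hconvt := hconv v v₀ t (1 - t) ht.le (by linarith) (by ring)
    rw [hcv, hv₀, ← EReal.coe_mul, ← EReal.coe_mul, ← EReal.coe_add] at hconvt
    have hLt : L (t • v + (1 - t) • v₀) - a = e + t • δ := by
      simp only [e, δ, map_add, map_smul]
      module
    have hmint := (hmin _).trans (add_le_add hconvt le_rfl)
    rw [hv₀, hLt, ← EReal.coe_add, ← EReal.coe_add, EReal.coe_le_coe_iff] at hmint
    have hexp : ⟪p, e + t • δ⟫ + lam / 2 * ‖e + t • δ‖ ^ 2 = ⟪p, e⟫ + lam / 2 * ‖e‖ ^ 2 +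
        t * ⟪p + lam • e, δ⟫ + t * (t * (lam / 2 * ‖δ‖ ^ 2)) := by
      rw [norm_add_sq_real, inner_add_right, inner_smul_right, inner_add_left, norm_smul,
        real_inner_smul_left, real_inner_smul_right, mul_pow, Real.norm_eq_abs, sq_abs]
      ring
    rw [hexp] at hmint
    have : 0 ≤ t * (cv - c + ⟪p + lam • e, δ⟫ + t * (lam / 2 * ‖δ‖ ^ 2)) := by linarith
    exact nonneg_of_mul_nonneg_right this ht

end FiniteDimensional

theorem LowerSemicontinuous.add_coe {α : Type*} [TopologicalSpace α] {f : α → EReal}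
    (hf : LowerSemicontinuous f) {g : α → ℝ} (hg : Continuous g) :
    LowerSemicontinuous fun x => f x + (g x : EReal) :=
  hf.add' (EReal.continuous_coe_iff.2 hg).lowerSemicontinuous fun _ =>
    EReal.continuousAt_add (Or.inr (EReal.coe_ne_bot _)) (Or.inr (EReal.coe_ne_top _))

section Semicontinuity

variable {E F : Type*} [NormedAddCommGroup E] [InnerProductSpace ℝ E]
  [NormedAddCommGroup F] [InnerProductSpace ℝ F]

theorem lowerSemicontinuous_fconj (φ : E → EReal) : LowerSemicontinuous (fconj φ) := by
  refine lowerSemicontinuous_iSup fun x => ?_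
  have := (lowerSemicontinuous_const : LowerSemicontinuous fun _ : E => -φ x).add_coe
    (g := fun ξ : E => ⟪ξ, x⟫) (by fun_prop)
  simpa only [sub_eq_add_neg, add_comm] using this

theorem isClosed_setOf_hasSubgrad {φ : E → EReal} (hφ : LowerSemicontinuous φ) :
    IsClosed {p : E × E | HasSubgrad φ p.2 p.1} := by
  simp only [HasSubgrad, Set.ofPred_forall]
  exact isClosed_iInter fun x' =>
    ((hφ.comp continuous_fst).add_coe (g := fun p : E × E => ⟪p.2, x' - p.1⟫)
      (by fun_prop)).isClosed_preimage (φ x')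

variable [FiniteDimensional ℝ E] [FiniteDimensional ℝ F]

theorem lowerSemicontinuous_hOne (f : E → EReal) (M : E →ₗ[ℝ] F) :
    LowerSemicontinuous (hOne f M) :=
  (lowerSemicontinuous_fconj f).comp (LinearMap.adjoint M).continuous_of_finiteDimensional.neg

theorem lowerSemicontinuous_hTwo (g : E → EReal) (C : E →ₗ[ℝ] F) (d : F) :
    LowerSemicontinuous (hTwo g C d) :=
  (lowerSemicontinuous_hOne g C).add_coe (g := fun z => ⟪d, z⟫) (by fun_prop)

end Semicontinuity

theorem exists_tendsto_of_fejer {X : Type*} [MetricSpace X] [ProperSpace X] {p : ℕ → X}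
    {S : Set X} (hS : S.Nonempty) (hfejer : ∀ s ∈ S, ∀ j, dist (p (j + 1)) s ≤ dist (p j) s)
    (hcluster : ∀ q (φ : ℕ → ℕ), StrictMono φ → Tendsto (p ∘ φ) atTop (𝓝 q) → q ∈ S) :
    ∃ q ∈ S, Tendsto p atTop (𝓝 q) := by
  obtain ⟨s, hs⟩ := hS
  have hanti : ∀ s ∈ S, Antitone fun j => dist (p j) s := fun s hs =>
    antitone_nat_of_succ_le (hfejer s hs)
  obtain ⟨q, -, φ, hφ, hlim⟩ := (isCompact_closedBall s (dist (p 0) s)).tendsto_subseq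
    fun j => hanti s hs (Nat.zero_le j)
  have hq := hcluster q φ hφ hlim
  refine ⟨q, hq, Metric.tendsto_atTop.2 fun ε hε => ?_⟩
  obtain ⟨k, hk⟩ := Metric.tendsto_atTop.1 hlim ε hε
  exact ⟨φ k, fun j hj => (hanti q hq hj).trans_lt (hk k le_rfl)⟩

theorem exists_tendsto_prod_of_fejer {F : Type*} [NormedAddCommGroup F] [NormedSpace ℝ F]
    [FiniteDimensional ℝ F] {z w : ℕ → F} {S : Set (F × F)} (hS : S.Nonempty)
    (hfejer : ∀ s ∈ S, ∀ j, ‖z (j + 1) - s.1‖ ^ 2 + ‖w (j + 1) - s.2‖ ^ 2 ≤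
      ‖z j - s.1‖ ^ 2 + ‖w j - s.2‖ ^ 2)
    (hcluster : ∀ s (φ : ℕ → ℕ), StrictMono φ → Tendsto (z ∘ φ) atTop (𝓝 s.1) →
      Tendsto (w ∘ φ) atTop (𝓝 s.2) → s ∈ S) :
    ∃ s ∈ S, Tendsto z atTop (𝓝 s.1) ∧ Tendsto w atTop (𝓝 s.2) := by
  set p : ℕ → WithLp 2 (F × F) := fun j => WithLp.toLp 2 (z j, w j)
  have hdist : ∀ j (s : F × F), dist (p j) (WithLp.toLp 2 s) =
      √(‖z j - s.1‖ ^ 2 + ‖w j - s.2‖ ^ 2) := fun j s => by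
    rw [WithLp.prod_dist_eq_of_L2, dist_eq_norm, dist_eq_norm]
    rfl
  obtain ⟨q, hq, hlim⟩ := exists_tendsto_of_fejer (S := WithLp.ofLp ⁻¹' S) (p := p)
    ⟨WithLp.toLp 2 hS.some, hS.some_mem⟩
    (fun s hs j => (hdist _ s.ofLp).trans_le <| (Real.sqrt_le_sqrt (hfejer _ hs j)).trans_eq
      (hdist j s.ofLp).symm)
    (fun q φ hφ hlim => hcluster _ φ hφ ((WithLp.continuous_fst 2 F F).tendsto q |>.comp hlim)
      ((WithLp.continuous_snd 2 F F).tendsto q |>.comp hlim))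
  exact ⟨_, hq, (WithLp.continuous_fst 2 F F).tendsto q |>.comp hlim,
    (WithLp.continuous_snd 2 F F).tendsto q |>.comp hlim⟩

theorem tendsto_zero_of_succ_add_le {a b : ℕ → ℝ} (ha : ∀ j, 0 ≤ a j) (hb : ∀ j, 0 ≤ b j)
    (h : ∀ j, a (j + 1) + b j ≤ a j) : Tendsto b atTop (𝓝 0) := by
  have hanti : Antitone a := antitone_nat_of_succ_le fun j => by linarith [h j, hb j]
  have hlim := tendsto_atTop_ciInf hanti ⟨0, by rintro _ ⟨j, rfl⟩; exact ha j⟩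
  have hgap : Tendsto (fun j => a j - a (j + 1)) atTop (𝓝 0) := by
    simpa using hlim.sub (hlim.comp (tendsto_add_atTop_nat 1))
  exact squeeze_zero hb (fun j => by linarith [h j]) hgap

section Saddle

variable {E₁ E₂ F : Type*} [NormedAddCommGroup E₁] [InnerProductSpace ℝ E₁]
  [NormedAddCommGroup E₂] [InnerProductSpace ℝ E₂] [NormedAddCommGroup F] [InnerProductSpace ℝ F]
  {f : E₁ → EReal} {g : E₂ → EReal} {M : E₁ →ₗ[ℝ] F} {C : E₂ →ₗ[ℝ] F} {d : F}
  {us : E₁} {vs : E₂} {zs : F}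

theorem Lag_comm (f : E₁ → EReal) (g : E₂ → EReal) (M : E₁ →ₗ[ℝ] F) (C : E₂ →ₗ[ℝ] F) (d : F)
    (u : E₁) (v : E₂) (z : F) : Lag f g M C d u v z = Lag g f C M d v u z := by
  simp only [Lag]
  rw [add_comm (f u), add_comm (M u)]

theorem IsSaddle.symm (h : IsSaddle f g M C d us vs zs) : IsSaddle g f C M d vs us zs := by
  obtain ⟨htop, hbot, hmin, hmax⟩ := h
  refine ⟨?_, ?_, fun v u => ?_, fun ζ => ?_⟩ <;> simp only [← Lag_comm f g M C d]
  exacts [htop, hbot, hmin u v, hmax ζ]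

theorem IsSaddle.hasSubgrad_left [FiniteDimensional ℝ E₁] [FiniteDimensional ℝ F]
    (h : IsSaddle f g M C d us vs zs) (hf : ∀ u, f u ≠ ⊥) (hg : ∀ v, g v ≠ ⊥) :
    ∃ c : ℝ, f us = c ∧ HasSubgrad f (-(LinearMap.adjoint M zs)) us := by
  obtain ⟨htop, -, hmin, -⟩ := h
  have hfus : f us ≠ ⊤ := fun h => htop <| by
    rw [Lag, h, EReal.top_add_of_ne_bot (hg vs), EReal.top_add_coe]
  have hgvs : g vs ≠ ⊤ := fun h => htop <| by
    rw [Lag, h, EReal.add_top_of_ne_bot (hf us), EReal.top_add_coe]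
  obtain ⟨cf, hcf⟩ : ∃ c : ℝ, f us = c := ⟨_, (EReal.coe_toReal hfus (hf us)).symm⟩
  obtain ⟨cg, hcg⟩ : ∃ c : ℝ, g vs = c := ⟨_, (EReal.coe_toReal hgvs (hg vs)).symm⟩
  refine ⟨cf, hcf, fun u => ?_⟩
  have hu := hmin u vs
  simp only [Lag, hcf, hcg] at hu
  rw [hcf]
  generalize f u = a at hu ⊢
  induction a using EReal.rec with
  | bot => simp at hu
  | top => exact le_top
  | coe a =>
    norm_cast at hu ⊢
    rw [inner_neg_left, LinearMap.adjoint_inner_left, map_sub, inner_sub_right,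
      real_inner_comm (M u) zs, real_inner_comm (M us) zs]
    simp only [inner_sub_left, inner_add_left] at hu
    linarith

theorem IsSaddle.mem_extSolSet [FiniteDimensional ℝ E₁] [FiniteDimensional ℝ E₂]
    [FiniteDimensional ℝ F] (h : IsSaddle f g M C d us vs zs) (hf : ∀ u, f u ≠ ⊥)
    (hg : ∀ v, g v ≠ ⊥) : (zs, d - C vs) ∈ extSolSet f g M C d := by
  obtain ⟨cf, hcf, hsubf⟩ := h.hasSubgrad_left hf hg
  obtain ⟨cg, hcg, hsubg⟩ := h.symm.hasSubgrad_left hg hf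
  have hfeas : M us + C vs - d = 0 := by
    have hmax := h.2.2.2 (zs + (M us + C vs - d))
    rw [Lag, Lag, hcf, hcg] at hmax
    norm_cast at hmax
    rw [inner_add_right] at hmax
    exact real_inner_self_nonpos.1 (by linarith)
  have hMus : M us = d - C vs := by rw [← sub_eq_zero, ← hfeas]; abel
  refine ⟨?_, (hasSubgrad_hTwo_of_hasSubgrad hsubg hcg).2⟩
  simpa only [hMus] using (hasSubgrad_hOne_of_hasSubgrad hsubf hcf).2

end Saddle

theorem add_le_add_of_hasSubgrad_neg {E : Type*} [NormedAddCommGroup E] [InnerProductSpace ℝ E]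
    {φ ψ : E → EReal} {w x : E} (h₁ : HasSubgrad φ (-w) x) (h₂ : HasSubgrad ψ w x) (ζ : E) :
    φ x + ψ x ≤ φ ζ + ψ ζ :=
  calc φ x + ψ x = φ x + ((⟪-w, ζ - x⟫ : ℝ) : EReal) + (ψ x + ((⟪w, ζ - x⟫ : ℝ) : EReal)) := by
        rw [add_add_add_comm, ← EReal.coe_add, inner_neg_left, neg_add_cancel, EReal.coe_zero,
          add_zero]
    _ ≤ φ ζ + ψ ζ := add_le_add (h₁ ζ) (h₂ ζ)

section StepAlgebra

variable {F : Type*} [NormedAddCommGroup F] [InnerProductSpace ℝ F]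

theorem norm_sq_add_norm_sq_pmm_le {Z W r t : F} {lam γ ρ ρb : ℝ}
    (hρ : ρ ∈ Set.Icc (1 - ρb) (1 + ρb)) (hρb : ρb ≤ 1) (hγ₀ : 0 ≤ γ)
    (hγ : γ * (‖r‖ ^ 2 + lam ^ 2 * ‖t‖ ^ 2) = lam * (‖r + t‖ ^ 2 - ⟪r, t⟫))
    (h₂ : 0 ≤ ⟪Z + lam • (r + t), W - (r + t)⟫) (h₁ : 0 ≤ ⟪Z + lam • r, t - W⟫) :
    ‖Z + (ρ * γ) • r‖ ^ 2 + ‖W - (ρ * γ * lam) • t‖ ^ 2 +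
        (1 - ρb ^ 2) * γ ^ 2 * (‖r‖ ^ 2 + lam ^ 2 * ‖t‖ ^ 2) ≤ ‖Z‖ ^ 2 + ‖W‖ ^ 2 := by
  set D := ‖r‖ ^ 2 + lam ^ 2 * ‖t‖ ^ 2
  have hdescent : ⟪Z, r⟫ - lam * ⟪W, t⟫ ≤ -(γ * D) := by
    -- the sum of `h₁` and `h₂`
    rw [hγ, norm_add_sq_real]
    simp only [inner_add_left, inner_add_right, inner_sub_right, real_inner_smul_left,
      real_inner_self_eq_norm_sq] at h₁ h₂
    rw [real_inner_comm W t, real_inner_comm W r, real_inner_comm t r, real_inner_comm r t] at *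
    nlinarith
  have hZ : ‖Z + (ρ * γ) • r‖ ^ 2 = ‖Z‖ ^ 2 + 2 * (ρ * γ) * ⟪Z, r⟫ + (ρ * γ) ^ 2 * ‖r‖ ^ 2 := by
    rw [norm_add_sq_real, real_inner_smul_right, norm_smul, mul_pow, Real.norm_eq_abs, sq_abs]
    ring
  have hW : ‖W - (ρ * γ * lam) • t‖ ^ 2 =
      ‖W‖ ^ 2 - 2 * (ρ * γ) * (lam * ⟪W, t⟫) + (ρ * γ) ^ 2 * (lam ^ 2 * ‖t‖ ^ 2) := by
    rw [norm_sub_sq_real, real_inner_smul_right, norm_smul, mul_pow, Real.norm_eq_abs, sq_abs]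
    ring
  have hρ₀ : 0 ≤ ρ := by linarith [hρ.1]
  have hρ₁ : (1 - ρ) ^ 2 ≤ ρb ^ 2 := sq_le_sq' (by linarith [hρ.2]) (by linarith [hρ.1])
  rw [hZ, hW]
  nlinarith [mul_le_mul_of_nonneg_left hdescent (by positivity : 0 ≤ 2 * (ρ * γ)),
    mul_le_mul_of_nonneg_right hρ₁ (by positivity : 0 ≤ γ ^ 2 * D)]

theorem pmm_stepsize_ge {r t : F} {lam γ : ℝ} (hlam : 0 < lam)
    (hD : 0 < ‖r‖ ^ 2 + lam ^ 2 * ‖t‖ ^ 2)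
    (hγ : γ * (‖r‖ ^ 2 + lam ^ 2 * ‖t‖ ^ 2) = lam * (‖r + t‖ ^ 2 - ⟪r, t⟫)) :
    lam / (2 * (1 + lam ^ 2)) ≤ γ := by
  rw [norm_add_sq_real] at hγ
  have hX : 0 < ‖r‖ ^ 2 + ‖t‖ ^ 2 := by
    by_contra! h
    nlinarith [sq_nonneg ‖r‖, sq_nonneg ‖t‖, sq_nonneg lam]
  have hrt : -(‖r‖ ^ 2 + ‖t‖ ^ 2) ≤ 2 * ⟪r, t⟫ := by
    nlinarith [norm_add_sq_real r t, sq_nonneg ‖r + t‖]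
  have hγ₀ : 0 ≤ γ := by
    refine nonneg_of_mul_nonneg_left (b := ‖r‖ ^ 2 + lam ^ 2 * ‖t‖ ^ 2) ?_ hD
    rw [hγ]; nlinarith
  rw [div_le_iff₀ (by positivity)]
  nlinarith [mul_le_mul_of_nonneg_left (by nlinarith : ‖r‖ ^ 2 + lam ^ 2 * ‖t‖ ^ 2 ≤
    (1 + lam ^ 2) * (‖r‖ ^ 2 + ‖t‖ ^ 2)) hγ₀]

end StepAlgebra

section PMM

variable {E₁ E₂ F : Type*} [NormedAddCommGroup E₁] [InnerProductSpace ℝ E₁]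
  [NormedAddCommGroup E₂] [InnerProductSpace ℝ E₂] [NormedAddCommGroup F] [InnerProductSpace ℝ F]

/-- One iteration of the PMM, from `(z₀, w₀) = (z_{k-1}, w_{k-1})` to
`(u₁, v₁, x₁, y₁, z₁, w₁, γ, ρ) = (u_k, v_k, x_k, y_k, z_k, w_k, γ_k, ρ_k)`. -/
structure IsPMMStep (f : E₁ → EReal) (g : E₂ → EReal) (M : E₁ →ₗ[ℝ] F) (C : E₂ →ₗ[ℝ] F) (d : F)
    (lam ρb : ℝ) (z₀ w₀ : F) (u₁ : E₁) (v₁ : E₂) (x₁ y₁ z₁ w₁ : F) (γ ρ : ℝ) : Prop where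
  min_v : ∀ v' : E₂,
    g v₁ + ((⟪z₀ + lam • w₀, C v₁ - d⟫ + lam / 2 * ‖C v₁ - d‖ ^ 2 : ℝ) : EReal) ≤
      g v' + ((⟪z₀ + lam • w₀, C v' - d⟫ + lam / 2 * ‖C v' - d‖ ^ 2 : ℝ) : EReal)
  min_u : ∀ u' : E₁,
    f u₁ + ((⟪z₀ + lam • (C v₁ - d), M u₁⟫ + lam / 2 * ‖M u₁‖ ^ 2 : ℝ) : EReal) ≤
      f u' + ((⟪z₀ + lam • (C v₁ - d), M u'⟫ + lam / 2 * ‖M u'‖ ^ 2 : ℝ) : EReal)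
  x_eq : x₁ = z₀ + lam • w₀ + lam • (C v₁ - d)
  y_eq : y₁ = x₁ - lam • (w₀ - M u₁)
  ne_zero : ‖M u₁ + C v₁ - d‖ + ‖M u₁ - w₀‖ ≠ 0
  γ_eq : γ = (lam * ‖C v₁ - d + w₀‖ ^ 2 + lam * ⟪d - C v₁ - M u₁, w₀ - M u₁⟫) /
    (‖M u₁ + C v₁ - d‖ ^ 2 + lam ^ 2 * ‖M u₁ - w₀‖ ^ 2)
  ρ_mem : ρ ∈ Set.Icc (1 - ρb) (1 + ρb)
  z_eq : z₁ = z₀ + (ρ * γ) • (M u₁ + C v₁ - d)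
  w_eq : w₁ = w₀ - (ρ * γ * lam) • (w₀ - M u₁)

namespace IsPMMStep

variable {f : E₁ → EReal} {g : E₂ → EReal} {M : E₁ →ₗ[ℝ] F} {C : E₂ →ₗ[ℝ] F} {d : F}
  {lam ρb : ℝ} {z₀ w₀ : F} {u₁ : E₁} {v₁ : E₂} {x₁ y₁ z₁ w₁ : F} {γ ρ : ℝ}

theorem x_eq_add (h : IsPMMStep f g M C d lam ρb z₀ w₀ u₁ v₁ x₁ y₁ z₁ w₁ γ ρ) :
    x₁ = z₀ + lam • ((M u₁ + C v₁ - d) + (w₀ - M u₁)) := by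
  rw [h.x_eq]; module

theorem y_eq_add (h : IsPMMStep f g M C d lam ρb z₀ w₀ u₁ v₁ x₁ y₁ z₁ w₁ γ ρ) :
    y₁ = z₀ + lam • (M u₁ + C v₁ - d) := by
  rw [h.y_eq, h.x_eq]; module

theorem residual_pos (h : IsPMMStep f g M C d lam ρb z₀ w₀ u₁ v₁ x₁ y₁ z₁ w₁ γ ρ)
    (hlam : 0 < lam) : 0 < ‖M u₁ + C v₁ - d‖ ^ 2 + lam ^ 2 * ‖w₀ - M u₁‖ ^ 2 := by
  have hne : ‖M u₁ + C v₁ - d‖ ≠ 0 ∨ ‖w₀ - M u₁‖ ≠ 0 := by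
    have := h.ne_zero
    rw [norm_sub_rev (M u₁) w₀] at this
    contrapose! this
    rw [this.1, this.2, add_zero]
  rcases hne with hr | ht
  · exact add_pos_of_pos_of_nonneg (pow_pos ((norm_nonneg _).lt_of_ne' hr) 2) (by positivity)
  · exact add_pos_of_nonneg_of_pos (by positivity)
      (mul_pos (pow_pos hlam 2) (pow_pos ((norm_nonneg _).lt_of_ne' ht) 2))

theorem stepsize_mul (h : IsPMMStep f g M C d lam ρb z₀ w₀ u₁ v₁ x₁ y₁ z₁ w₁ γ ρ)
    (hlam : 0 < lam) :
    γ * (‖M u₁ + C v₁ - d‖ ^ 2 + lam ^ 2 * ‖w₀ - M u₁‖ ^ 2) = lam *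
      (‖(M u₁ + C v₁ - d) + (w₀ - M u₁)‖ ^ 2 - ⟪M u₁ + C v₁ - d, w₀ - M u₁⟫) := by
  have hγ := h.γ_eq
  rw [norm_sub_rev (M u₁) w₀, show C v₁ - d + w₀ = (M u₁ + C v₁ - d) + (w₀ - M u₁) by abel,
    show d - C v₁ - M u₁ = -(M u₁ + C v₁ - d) by abel, inner_neg_left] at hγ
  rw [hγ, div_mul_cancel₀ _ (h.residual_pos hlam).ne']
  ring

variable [FiniteDimensional ℝ F]

theorem hasSubgrad_hTwo [FiniteDimensional ℝ E₂]
    (h : IsPMMStep f g M C d lam ρb z₀ w₀ u₁ v₁ x₁ y₁ z₁ w₁ γ ρ) (hg : IsPCC g) :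
    (∃ c : ℝ, hTwo g C d x₁ = c) ∧ HasSubgrad (hTwo g C d) (d - C v₁) x₁ := by
  obtain ⟨hbot, ⟨v, hv⟩, -, hconv⟩ := hg
  have hv₁ := ne_top_of_forall_le_add_coe h.min_v hv
  obtain ⟨c, hc⟩ : ∃ c : ℝ, g v₁ = c := ⟨_, (EReal.coe_toReal hv₁ (hbot v₁)).symm⟩
  rw [h.x_eq]
  exact hasSubgrad_hTwo_of_hasSubgrad
    (hasSubgrad_of_forall_le_add_augmented hbot hconv hc h.min_v) hc

theorem hasSubgrad_hOne [FiniteDimensional ℝ E₁]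
    (h : IsPMMStep f g M C d lam ρb z₀ w₀ u₁ v₁ x₁ y₁ z₁ w₁ γ ρ) (hf : IsPCC f) :
    (∃ c : ℝ, hOne f M y₁ = c) ∧ HasSubgrad (hOne f M) (-(M u₁)) y₁ := by
  obtain ⟨hbot, ⟨u, hu⟩, -, hconv⟩ := hf
  have hmin : ∀ u', f u₁ + ((⟪z₀ + lam • (C v₁ - d), M u₁ - 0⟫ +
      lam / 2 * ‖M u₁ - 0‖ ^ 2 : ℝ) : EReal) ≤
      f u' + ((⟪z₀ + lam • (C v₁ - d), M u' - 0⟫ + lam / 2 * ‖M u' - 0‖ ^ 2 : ℝ) : EReal) := by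
    simpa only [sub_zero] using h.min_u
  have hu₁ := ne_top_of_forall_le_add_coe hmin hu
  obtain ⟨c, hc⟩ : ∃ c : ℝ, f u₁ = c := ⟨_, (EReal.coe_toReal hu₁ (hbot u₁)).symm⟩
  have hy : y₁ = z₀ + lam • (C v₁ - d) + lam • (M u₁ - 0) := by rw [h.y_eq_add]; module
  rw [hy]
  exact hasSubgrad_hOne_of_hasSubgrad
    (hasSubgrad_of_forall_le_add_augmented hbot hconv hc hmin) hc

theorem inner_nonneg [FiniteDimensional ℝ E₁] [FiniteDimensional ℝ E₂]
    (h : IsPMMStep f g M C d lam ρb z₀ w₀ u₁ v₁ x₁ y₁ z₁ w₁ γ ρ) (hf : IsPCC f) (hg : IsPCC g)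
    {p : F × F} (hp : p ∈ extSolSet f g M C d) :
    0 ≤ ⟪(z₀ - p.1) + lam • ((M u₁ + C v₁ - d) + (w₀ - M u₁)),
      (w₀ - p.2) - ((M u₁ + C v₁ - d) + (w₀ - M u₁))⟫ ∧
    0 ≤ ⟪(z₀ - p.1) + lam • (M u₁ + C v₁ - d), (w₀ - M u₁) - (w₀ - p.2)⟫ := by
  obtain ⟨⟨c₂, hc₂⟩, hsub₂⟩ := h.hasSubgrad_hTwo hg
  obtain ⟨⟨c₁, hc₁⟩, hsub₁⟩ := h.hasSubgrad_hOne hf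
  constructor
  · convert hsub₂.inner_sub_nonneg hp.2 hc₂ using 2
    · rw [h.x_eq_add]; abel
    · abel
  · convert hsub₁.inner_sub_nonneg hp.1 hc₁ using 2
    · rw [h.y_eq_add]; abel
    · abel

theorem fejer [FiniteDimensional ℝ E₁] [FiniteDimensional ℝ E₂]
    (h : IsPMMStep f g M C d lam ρb z₀ w₀ u₁ v₁ x₁ y₁ z₁ w₁ γ ρ) (hf : IsPCC f) (hg : IsPCC g)
    (hlam : 0 < lam) (hρb : ρb ≤ 1) {p : F × F} (hp : p ∈ extSolSet f g M C d) :
    ‖z₁ - p.1‖ ^ 2 + ‖w₁ - p.2‖ ^ 2 + (1 - ρb ^ 2) * (lam / (2 * (1 + lam ^ 2))) ^ 2 *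
        (‖M u₁ + C v₁ - d‖ ^ 2 + lam ^ 2 * ‖w₀ - M u₁‖ ^ 2) ≤
      ‖z₀ - p.1‖ ^ 2 + ‖w₀ - p.2‖ ^ 2 := by
  have hD := h.residual_pos hlam
  have hγ := h.stepsize_mul hlam
  obtain ⟨h₂, h₁⟩ := h.inner_nonneg hf hg hp
  have hγmin := pmm_stepsize_ge hlam hD hγ
  have hstep := norm_sq_add_norm_sq_pmm_le h.ρ_mem hρb (hγmin.trans' (by positivity)) hγ h₂ h₁
  have hz : z₁ - p.1 = (z₀ - p.1) + (ρ * γ) • (M u₁ + C v₁ - d) := by rw [h.z_eq]; abel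
  have hw : w₁ - p.2 = (w₀ - p.2) - (ρ * γ * lam) • (w₀ - M u₁) := by rw [h.w_eq]; abel
  have hρb₀ : 0 ≤ 1 - ρb ^ 2 := by nlinarith [h.ρ_mem.1.trans h.ρ_mem.2]
  rw [hz, hw]
  refine le_trans ?_ hstep
  gcongr

end IsPMMStep

end PMM

section PMMSeq

variable {E₁ E₂ F : Type*} [NormedAddCommGroup E₁] [InnerProductSpace ℝ E₁]
  [NormedAddCommGroup E₂] [InnerProductSpace ℝ E₂] [NormedAddCommGroup F] [InnerProductSpace ℝ F]

def IsPMMSeq (f : E₁ → EReal) (g : E₂ → EReal) (M : E₁ →ₗ[ℝ] F) (C : E₂ →ₗ[ℝ] F) (d : F)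
    (lam ρb : ℝ) (u : ℕ → E₁) (v : ℕ → E₂) (z w x y : ℕ → F) (γ ρ : ℕ → ℝ) : Prop :=
  ∀ j, IsPMMStep f g M C d lam ρb (z j) (w j) (u (j + 1)) (v (j + 1)) (x (j + 1)) (y (j + 1))
    (z (j + 1)) (w (j + 1)) (γ (j + 1)) (ρ (j + 1))

namespace IsPMMSeq

variable {f : E₁ → EReal} {g : E₂ → EReal} {M : E₁ →ₗ[ℝ] F} {C : E₂ →ₗ[ℝ] F} {d : F} {lam ρb : ℝ}
  {u : ℕ → E₁} {v : ℕ → E₂} {z w x y : ℕ → F} {γ ρ : ℕ → ℝ}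

theorem tendsto_iterates (h : IsPMMSeq f g M C d lam ρb u v z w x y γ ρ) {zs ws : F}
    (hz : Tendsto z atTop (𝓝 zs)) (hw : Tendsto w atTop (𝓝 ws))
    (hr : Tendsto (fun j => M (u (j + 1)) + C (v (j + 1)) - d) atTop (𝓝 0))
    (ht : Tendsto (fun j => w j - M (u (j + 1))) atTop (𝓝 0)) :
    Tendsto x atTop (𝓝 zs) ∧ Tendsto (fun k => d - C (v k)) atTop (𝓝 ws) ∧
      Tendsto y atTop (𝓝 zs) ∧ Tendsto (fun k => M (u k)) atTop (𝓝 ws) ∧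
      Tendsto (fun k => M (u k) + C (v k) - d) atTop (𝓝 0) ∧
      Tendsto (fun k => x k - y k) atTop (𝓝 0) := by
  have hrt := hr.add ht
  rw [add_zero] at hrt
  simp only [← tendsto_add_atTop_iff_nat 1 (f := x), ← tendsto_add_atTop_iff_nat 1 (f := y),
    ← tendsto_add_atTop_iff_nat 1 (f := fun k => d - C (v k)),
    ← tendsto_add_atTop_iff_nat 1 (f := fun k => M (u k)),
    ← tendsto_add_atTop_iff_nat 1 (f := fun k => M (u k) + C (v k) - d),
    ← tendsto_add_atTop_iff_nat 1 (f := fun k => x k - y k)]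
  refine ⟨?_, ?_, ?_, ?_, hr, ?_⟩
  · simpa using (hz.add (hrt.const_smul lam)).congr fun j => (h j).x_eq_add.symm
  · simpa using (hw.sub hrt).congr fun j => by abel
  · simpa using (hz.add (hr.const_smul lam)).congr fun j => (h j).y_eq_add.symm
  · simpa using (hw.sub ht).congr fun j => by abel
  · simpa using (ht.const_smul lam).congr fun j => by rw [(h j).x_eq_add, (h j).y_eq_add]; module

variable [FiniteDimensional ℝ E₁] [FiniteDimensional ℝ E₂] [FiniteDimensional ℝ F]

theorem tendsto_residual (h : IsPMMSeq f g M C d lam ρb u v z w x y γ ρ) (hf : IsPCC f)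
    (hg : IsPCC g) (hlam : 0 < lam) (hρb : ρb ∈ Set.Ico 0 1)
    (hS : (extSolSet f g M C d).Nonempty) :
    Tendsto (fun j => M (u (j + 1)) + C (v (j + 1)) - d) atTop (𝓝 0) ∧
      Tendsto (fun j => w j - M (u (j + 1))) atTop (𝓝 0) := by
  obtain ⟨p, hp⟩ := hS
  set D := fun j => ‖M (u (j + 1)) + C (v (j + 1)) - d‖ ^ 2 + lam ^ 2 * ‖w j - M (u (j + 1))‖ ^ 2
  set κ := (1 - ρb ^ 2) * (lam / (2 * (1 + lam ^ 2))) ^ 2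
  have hκ : 0 < κ := by
    have : ρb ^ 2 < 1 := by nlinarith [hρb.1, hρb.2]
    have : 0 < 1 - ρb ^ 2 := by linarith
    positivity
  have hD : Tendsto D atTop (𝓝 0) := by
    have := tendsto_zero_of_succ_add_le (a := fun j => ‖z j - p.1‖ ^ 2 + ‖w j - p.2‖ ^ 2)
      (b := fun j => κ * D j) (fun j => by positivity) (fun j => by positivity)
      fun j => (h j).fejer hf hg hlam hρb.2.le hp
    simpa [hκ.ne'] using this.const_mul κ⁻¹
  have hsqrt : Tendsto (fun j => √(D j)) atTop (𝓝 0) := by simpa using hD.sqrt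
  constructor
  · refine squeeze_zero_norm (fun j => ?_) hsqrt
    rw [Real.le_sqrt (norm_nonneg _) (by positivity)]
    have : 0 ≤ lam ^ 2 * ‖w j - M (u (j + 1))‖ ^ 2 := by positivity
    simp only [D]; linarith
  · refine squeeze_zero_norm (fun j => ?_) (by simpa using hsqrt.div_const lam)
    rw [le_div_iff₀ hlam, Real.le_sqrt (by positivity) (by positivity)]
    have : 0 ≤ ‖M (u (j + 1)) + C (v (j + 1)) - d‖ ^ 2 := by positivity
    simp only [D]; nlinarith

theorem mem_extSolSet_of_tendsto (h : IsPMMSeq f g M C d lam ρb u v z w x y γ ρ)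
    (hf : IsPCC f) (hg : IsPCC g)
    (hr : Tendsto (fun j => M (u (j + 1)) + C (v (j + 1)) - d) atTop (𝓝 0))
    (ht : Tendsto (fun j => w j - M (u (j + 1))) atTop (𝓝 0)) {φ : ℕ → ℕ}
    (hφ : Tendsto φ atTop atTop) {p : F × F} (hz : Tendsto (z ∘ φ) atTop (𝓝 p.1))
    (hw : Tendsto (w ∘ φ) atTop (𝓝 p.2)) : p ∈ extSolSet f g M C d := by
  have hr' := hr.comp hφ
  have hrt' := (hr.add ht).comp hφ
  simp only [add_zero] at hrt'
  constructor
  · refine (isClosed_setOf_hasSubgrad (lowerSemicontinuous_hOne f M)).mem_of_tendsto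
      (x := (p.1, -p.2)) (b := atTop)
      (f := fun j => (y (φ j + 1), -M (u (φ j + 1)))) (Tendsto.prodMk_nhds ?_ ?_)
      (Eventually.of_forall fun j => ((h (φ j)).hasSubgrad_hOne hf).2)
    · simpa using (hz.add (hr'.const_smul lam)).congr fun j => ((h (φ j)).y_eq_add).symm
    · have := (ht.comp hφ).sub hw
      rw [zero_sub] at this
      exact this.congr fun j => by simp
  · refine (isClosed_setOf_hasSubgrad (lowerSemicontinuous_hTwo g C d)).mem_of_tendsto
      (b := atTop) (f := fun j => (x (φ j + 1), d - C (v (φ j + 1))))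
      (Tendsto.prodMk_nhds ?_ ?_)
      (Eventually.of_forall fun j => ((h (φ j)).hasSubgrad_hTwo hg).2)
    · simpa using (hz.add (hrt'.const_smul lam)).congr fun j => ((h (φ j)).x_eq_add).symm
    · simpa using (hw.sub hrt').congr fun j => by dsimp; abel

theorem exists_tendsto (h : IsPMMSeq f g M C d lam ρb u v z w x y γ ρ) (hf : IsPCC f)
    (hg : IsPCC g) (hlam : 0 < lam) (hρb : ρb ∈ Set.Ico 0 1)
    (hS : (extSolSet f g M C d).Nonempty) :
    ∃ p ∈ extSolSet f g M C d, Tendsto z atTop (𝓝 p.1) ∧ Tendsto w atTop (𝓝 p.2) := by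
  obtain ⟨hr, ht⟩ := h.tendsto_residual hf hg hlam hρb hS
  refine exists_tendsto_prod_of_fejer hS (fun p hp j => ?_) fun p φ hφ hz hw =>
    h.mem_extSolSet_of_tendsto hf hg hr ht hφ.tendsto_atTop hz hw
  have hdecrease := (h j).fejer hf hg hlam hρb.2.le hp
  have hρb₁ : 0 ≤ 1 - ρb ^ 2 := by nlinarith [hρb.1, hρb.2]
  have : 0 ≤ (1 - ρb ^ 2) * (lam / (2 * (1 + lam ^ 2))) ^ 2 *
      (‖M (u (j + 1)) + C (v (j + 1)) - d‖ ^ 2 + lam ^ 2 * ‖w j - M (u (j + 1))‖ ^ 2) := by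
    positivity
  linarith

end IsPMMSeq

end PMMSeq

theorem pmm_global_convergence_general
    (m1 m2 n : ℕ)
    (f : EuclideanSpace ℝ (Fin m1) → EReal) (g : EuclideanSpace ℝ (Fin m2) → EReal)
    (hf : IsPCC f) (hg : IsPCC g)
    (M : EuclideanSpace ℝ (Fin m1) →ₗ[ℝ] EuclideanSpace ℝ (Fin n))
    (C : EuclideanSpace ℝ (Fin m2) →ₗ[ℝ] EuclideanSpace ℝ (Fin n))
    (d : EuclideanSpace ℝ (Fin n))
    (lam : ℝ) (hlam : 0 < lam) (ρb : ℝ) (hρb : ρb ∈ Set.Ico (0 : ℝ) 1)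
    (u : ℕ → EuclideanSpace ℝ (Fin m1)) (v : ℕ → EuclideanSpace ℝ (Fin m2))
    (z w x y : ℕ → EuclideanSpace ℝ (Fin n)) (γ ρ : ℕ → ℝ)
    (hv : ∀ k, 1 ≤ k → ∀ v' : EuclideanSpace ℝ (Fin m2),
      g (v k) + ((⟪z (k-1) + lam • w (k-1), C (v k) - d⟫ +
          lam / 2 * ‖C (v k) - d‖ ^ 2 : ℝ) : EReal) ≤
        g v' + ((⟪z (k-1) + lam • w (k-1), C v' - d⟫ +
          lam / 2 * ‖C v' - d‖ ^ 2 : ℝ) : EReal))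
    (hu : ∀ k, 1 ≤ k → ∀ u' : EuclideanSpace ℝ (Fin m1),
      f (u k) + ((⟪z (k-1) + lam • (C (v k) - d), M (u k)⟫ +
          lam / 2 * ‖M (u k)‖ ^ 2 : ℝ) : EReal) ≤
        f u' + ((⟪z (k-1) + lam • (C (v k) - d), M u'⟫ +
          lam / 2 * ‖M u'‖ ^ 2 : ℝ) : EReal))
    (hx : ∀ k, 1 ≤ k → x k = z (k-1) + lam • w (k-1) + lam • (C (v k) - d))
    (hy : ∀ k, 1 ≤ k → y k = x k - lam • (w (k-1) - M (u k)))
    (hnz : ∀ k, 1 ≤ k → ‖M (u k) + C (v k) - d‖ + ‖M (u k) - w (k-1)‖ ≠ 0)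
    (hγ : ∀ k, 1 ≤ k → γ k = (lam * ‖C (v k) - d + w (k-1)‖ ^ 2 +
        lam * ⟪d - C (v k) - M (u k), w (k-1) - M (u k)⟫) /
      (‖M (u k) + C (v k) - d‖ ^ 2 + lam ^ 2 * ‖M (u k) - w (k-1)‖ ^ 2))
    (hρ : ∀ k, 1 ≤ k → ρ k ∈ Set.Icc (1 - ρb) (1 + ρb))
    (hz : ∀ k, 1 ≤ k → z k = z (k-1) + (ρ k * γ k) • (M (u k) + C (v k) - d))
    (hw : ∀ k, 1 ≤ k → w k = w (k-1) - (ρ k * γ k * lam) • (w (k-1) - M (u k)))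
    (hsaddle : ∃ us vs zs, IsSaddle f g M C d us vs zs)
    :
    ∃ zs ws : EuclideanSpace ℝ (Fin n),
      (∀ ζ : EuclideanSpace ℝ (Fin n),
        hOne f M zs + hTwo g C d zs ≤ hOne f M ζ + hTwo g C d ζ) ∧
      HasSubgrad (hOne f M) (-ws) zs ∧
      HasSubgrad (hTwo g C d) ws zs ∧
      Filter.Tendsto x Filter.atTop (nhds zs) ∧
      Filter.Tendsto (fun k => d - C (v k)) Filter.atTop (nhds ws) ∧
      Filter.Tendsto y Filter.atTop (nhds zs) ∧
      Filter.Tendsto (fun k => -(-(M (u k)))) Filter.atTop (nhds ws) ∧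
      Filter.Tendsto z Filter.atTop (nhds zs) ∧
      Filter.Tendsto w Filter.atTop (nhds ws) ∧
      Filter.Tendsto (fun k => M (u k) + C (v k) - d) Filter.atTop (nhds 0) ∧
      Filter.Tendsto (fun k => x k - y k) Filter.atTop (nhds 0) := by
  -- `hv (j + 1)` etc., where `j + 1 - 1` reduces to `j`
  have hpmm : IsPMMSeq f g M C d lam ρb u v z w x y γ ρ := fun j =>
    ⟨hv _ j.succ_pos, hu _ j.succ_pos, hx _ j.succ_pos, hy _ j.succ_pos, hnz _ j.succ_pos,
      hγ _ j.succ_pos, hρ _ j.succ_pos, hz _ j.succ_pos, hw _ j.succ_pos⟩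
  obtain ⟨us, vs, zs₀, hsaddle⟩ := hsaddle
  have hS : (extSolSet f g M C d).Nonempty := ⟨_, hsaddle.mem_extSolSet hf.1 hg.1⟩
  obtain ⟨hr, ht⟩ := hpmm.tendsto_residual hf hg hlam hρb hS
  obtain ⟨⟨zs, ws⟩, hmem, hzlim, hwlim⟩ := hpmm.exists_tendsto hf hg hlam hρb hS
  obtain ⟨hxlim, hblim, hylim, halim, hres, hxy⟩ := hpmm.tendsto_iterates hzlim hwlim hr ht
  exact ⟨zs, ws, add_le_add_of_hasSubgrad_neg hmem.1 hmem.2, hmem.1, hmem.2, hxlim, hblim, hylim,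
    by simpa only [neg_neg] using halim, hzlim, hwlim, hres, hxy⟩

/-- global convergence of the PMM (items (a)-(b)). -/
theorem pmm_global_convergence
    (m1 m2 n : ℕ)
    (f : EuclideanSpace ℝ (Fin m1) → EReal) (g : EuclideanSpace ℝ (Fin m2) → EReal)
    (hf : IsPCC f) (hg : IsPCC g)
    (M : EuclideanSpace ℝ (Fin m1) →ₗ[ℝ] EuclideanSpace ℝ (Fin n))
    (C : EuclideanSpace ℝ (Fin m2) →ₗ[ℝ] EuclideanSpace ℝ (Fin n))
    (d : EuclideanSpace ℝ (Fin n))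
    (lam : ℝ) (hlam : 0 < lam) (ρb : ℝ) (hρb : ρb ∈ Set.Ico (0 : ℝ) 1)
    (u : ℕ → EuclideanSpace ℝ (Fin m1)) (v : ℕ → EuclideanSpace ℝ (Fin m2))
    (z w x y : ℕ → EuclideanSpace ℝ (Fin n)) (γ ρ : ℕ → ℝ)
    (hv : ∀ k, 1 ≤ k → ∀ v' : EuclideanSpace ℝ (Fin m2),
      g (v k) + ((⟪z (k-1) + lam • w (k-1), C (v k) - d⟫ +
          lam / 2 * ‖C (v k) - d‖ ^ 2 : ℝ) : EReal) ≤
        g v' + ((⟪z (k-1) + lam • w (k-1), C v' - d⟫ +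
          lam / 2 * ‖C v' - d‖ ^ 2 : ℝ) : EReal))
    (hu : ∀ k, 1 ≤ k → ∀ u' : EuclideanSpace ℝ (Fin m1),
      f (u k) + ((⟪z (k-1) + lam • (C (v k) - d), M (u k)⟫ +
          lam / 2 * ‖M (u k)‖ ^ 2 : ℝ) : EReal) ≤
        f u' + ((⟪z (k-1) + lam • (C (v k) - d), M u'⟫ +
          lam / 2 * ‖M u'‖ ^ 2 : ℝ) : EReal))
    (hx : ∀ k, 1 ≤ k → x k = z (k-1) + lam • w (k-1) + lam • (C (v k) - d))
    (hy : ∀ k, 1 ≤ k → y k = x k - lam • (w (k-1) - M (u k)))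
    (hnz : ∀ k, 1 ≤ k → ‖M (u k) + C (v k) - d‖ + ‖M (u k) - w (k-1)‖ ≠ 0)
    (hγ : ∀ k, 1 ≤ k → γ k = (lam * ‖C (v k) - d + w (k-1)‖ ^ 2 +
        lam * ⟪d - C (v k) - M (u k), w (k-1) - M (u k)⟫) /
      (‖M (u k) + C (v k) - d‖ ^ 2 + lam ^ 2 * ‖M (u k) - w (k-1)‖ ^ 2))
    (hρ : ∀ k, 1 ≤ k → ρ k ∈ Set.Icc (1 - ρb) (1 + ρb))
    (hz : ∀ k, 1 ≤ k → z k = z (k-1) + (ρ k * γ k) • (M (u k) + C (v k) - d))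
    (hw : ∀ k, 1 ≤ k → w k = w (k-1) - (ρ k * γ k * lam) • (w (k-1) - M (u k)))
    (hsaddle : ∃ us vs zs, IsSaddle f g M C d us vs zs)
    (hA2 : (intrinsicInterior ℝ {ξ : EuclideanSpace ℝ (Fin m1) | fconj f ξ < ⊤} ∩
      Set.range (LinearMap.adjoint M)).Nonempty)
    (hA3 : (intrinsicInterior ℝ {ξ : EuclideanSpace ℝ (Fin m2) | fconj g ξ < ⊤} ∩
      Set.range (LinearMap.adjoint C)).Nonempty)
    :
    ∃ zs ws : EuclideanSpace ℝ (Fin n),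
      (∀ ζ : EuclideanSpace ℝ (Fin n),
        hOne f M zs + hTwo g C d zs ≤ hOne f M ζ + hTwo g C d ζ) ∧
      HasSubgrad (hOne f M) (-ws) zs ∧
      HasSubgrad (hTwo g C d) ws zs ∧
      Filter.Tendsto x Filter.atTop (nhds zs) ∧
      Filter.Tendsto (fun k => d - C (v k)) Filter.atTop (nhds ws) ∧
      Filter.Tendsto y Filter.atTop (nhds zs) ∧
      Filter.Tendsto (fun k => -(-(M (u k)))) Filter.atTop (nhds ws) ∧
      Filter.Tendsto z Filter.atTop (nhds zs) ∧
      Filter.Tendsto w Filter.atTop (nhds ws) ∧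
      Filter.Tendsto (fun k => M (u k) + C (v k) - d) Filter.atTop (nhds 0) ∧
      Filter.Tendsto (fun k => x k - y k) Filter.atTop (nhds 0) :=
  pmm_global_convergence_general m1 m2 n f g hf hg M C d lam hlam ρb hρb u v z w x y γ ρ hv hu hx hy
    hnz hγ hρ hz hw hsaddle
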